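/- Let D be a digraph, P a partial decomposition of D, and Q a partial decomposition of D − E(P). Then P ∪ Q is a partial decomposition of D. -/

import Mathlib

open Finset

variable {V : Type*}

/-- Out-degree of a vertex in a digraph. -/
noncomputable def outDeg (D : V → V → Prop) (v : V) : ℕ := Nat.card {u // D v u}

/-- In-degree of a vertex in a digraph. -/
noncomputable def inDeg (D : V → V → Prop) (v : V) : ℕ := Nat.card {u // D u v}

/-- The (signed) excess of a vertex: `d⁺(v) − d⁻(v)`. -/
noncomputable def exInt (D : V → V → Prop) (v : V) : ℤ :=
  (outDeg D v : ℤ) - (inDeg D v : ℤ)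

/-- Positive excess `ex⁺(v) = max{d⁺(v)−d⁻(v),0}`. -/
noncomputable def exPlus (D : V → V → Prop) (v : V) : ℕ := (exInt D v).toNat

/-- Negative excess `ex⁻(v) = max{d⁻(v)−d⁺(v),0}`. -/
noncomputable def exMinus (D : V → V → Prop) (v : V) : ℕ := (-(exInt D v)).toNat

/-- The excess of a digraph: `ex(D) = ∑_v ex⁺(v) = (1/2)∑_v |ex(v)|`. -/
noncomputable def exD [Fintype V] (D : V → V → Prop) : ℕ := ∑ v, exPlus D v

/-- The list of (directed) edges traversed by a path, given as its list of vertices. -/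
def pathEdges (p : List V) : List (V × V) := p.zip p.tail

/-- A directed path of `D` with at least one edge, given by its list of (distinct) vertices. -/
def IsPath (D : V → V → Prop) (p : List V) : Prop :=
  p.Nodup ∧ 2 ≤ p.length ∧ ∀ e ∈ pathEdges p, D e.1 e.2

/-- A path decomposition of `D`: a list of paths whose edge sets partition `E(D)`. -/
def IsPathDecomp (D : V → V → Prop) (Ps : List (List V)) : Prop :=
  (∀ p ∈ Ps, IsPath D p) ∧ ((Ps.map pathEdges).flatten.Nodup) ∧
    ∀ u v : V, D u v ↔ (u, v) ∈ (Ps.map pathEdges).flatten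

/-- Number of paths in `Ps` starting at `v`. -/
def startsAt [DecidableEq V] (Ps : List (List V)) (v : V) : ℕ :=
  Ps.countP (fun p => decide (p.head? = some v))

/-- Number of paths in `Ps` ending at `v`. -/
def endsAt [DecidableEq V] (Ps : List (List V)) (v : V) : ℕ :=
  Ps.countP (fun p => decide (p.getLast? = some v))

/-- A partial decomposition of `D`: edge-disjoint paths of `D` such that at most `ex⁺(v)`
paths start at `v` and at most `ex⁻(v)` paths end at `v`, for each vertex `v`. -/
def IsPartialDecomp [DecidableEq V] (D : V → V → Prop) (Ps : List (List V)) : Prop :=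
  (∀ p ∈ Ps, IsPath D p) ∧ ((Ps.map pathEdges).flatten.Nodup) ∧
    ∀ v : V, startsAt Ps v ≤ exPlus D v ∧ endsAt Ps v ≤ exMinus D v

/-!
Edge-disjointness of `P ∪ Q` is immediate, since `Q` lives in `D − E(P)`. For the endpoint
bounds, flow conservation along paths shows that removing `E(P)` changes the excess
`d⁺(v) − d⁻(v)` by exactly (number of `P`-paths ending at `v`) − (number starting at `v`);
since `P` respects `ex±_D`, at most one of these two numbers is nonzero, and the bounds for `Q`
in `D − E(P)` add up to those for `P ∪ Q` in `D`.
-/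

def deleteEdges (D : V → V → Prop) (F : List (V × V)) : V → V → Prop :=
  fun u w => D u w ∧ (u, w) ∉ F

theorem Set.ncard_sdiff_add_ncard_or_eq_zero {α : Type*} {s t : Set α} (hs : s.Finite)
    (hst : s ⊆ t) : (t \ s).ncard + s.ncard = t.ncard ∨ t.ncard = 0 ∧ (t \ s).ncard = 0 := by
  by_cases ht : t.Finite
  · exact .inl (Set.ncard_sdiff_add_ncard_of_subset hst ht)
  · exact .inr ⟨Set.Infinite.ncard ht, (Set.Infinite.sdiff ht hs).ncard⟩

@[simp]
theorem pathEdges_cons_cons (x y : V) (t : List V) :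
    pathEdges (x :: y :: t) = (x, y) :: pathEdges (y :: t) := rfl

theorem IsPath.mono {D D' : V → V → Prop} (hDD' : ∀ u w, D u w → D' u w) {p : List V}
    (hp : IsPath D p) : IsPath D' p :=
  ⟨hp.1, hp.2.1, fun e he => hDD' _ _ (hp.2.2 e he)⟩

section

variable [DecidableEq V]

def edgesOut (F : List (V × V)) (v : V) : ℕ := F.countP (fun e => e.1 = v)

def edgesIn (F : List (V × V)) (v : V) : ℕ := F.countP (fun e => e.2 = v)

theorem ncard_outNeighbors_list {F : List (V × V)} (hF : F.Nodup) (v : V) :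
    {u | (v, u) ∈ F}.ncard = edgesOut F v := by
  have hpre : {u | (v, u) ∈ F} = Prod.mk v ⁻¹' ↑(F.filter (fun e => e.1 = v)).toFinset := by
    ext u; simp
  rw [hpre, Set.ncard_preimage_of_injective_subset_range (Prod.mk_right_injective v),
    Set.ncard_coe_finset, List.toFinset_card_of_nodup (hF.filter _), edgesOut,
    List.countP_eq_length_filter]
  rintro ⟨a, b⟩ h
  simp only [List.coe_toFinset, List.mem_filter, decide_eq_true_eq, Set.mem_ofPred_eq] at h
  exact ⟨b, by rw [h.2]⟩

/-- Deleting finitely many edges lowers the out-degree by their number, except that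
`Nat.card` of an infinite neighbourhood is `0` both before and after. -/
theorem outDeg_deleteEdges {D : V → V → Prop} {F : List (V × V)} (hF : F.Nodup)
    (hFD : ∀ e ∈ F, D e.1 e.2) (v : V) :
    outDeg (deleteEdges D F) v + edgesOut F v = outDeg D v ∨
      outDeg D v = 0 ∧ outDeg (deleteEdges D F) v = 0 := by
  have hdel : outDeg (deleteEdges D F) v = ({u | D v u} \ {u | (v, u) ∈ F}).ncard := by
    rw [← Nat.card_coe_set_eq]; rfl
  have hfin : {u | (v, u) ∈ F}.Finite :=
    F.finite_toSet.preimage (Prod.mk_right_injective v).injOn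
  have hout : outDeg D v = {u | D v u}.ncard := by
    rw [← Nat.card_coe_set_eq]; rfl
  rw [hdel, hout, ← ncard_outNeighbors_list hF]
  exact Set.ncard_sdiff_add_ncard_or_eq_zero hfin fun u hu => hFD _ hu

theorem inDeg_deleteEdges {D : V → V → Prop} {F : List (V × V)} (hF : F.Nodup)
    (hFD : ∀ e ∈ F, D e.1 e.2) (v : V) :
    inDeg (deleteEdges D F) v + edgesIn F v = inDeg D v ∨
      inDeg D v = 0 ∧ inDeg (deleteEdges D F) v = 0 := by
  have hflip : flip (deleteEdges D F) = deleteEdges (flip D) (F.map Prod.swap) := by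
    funext u w; simp [deleteEdges, flip]
  have hswap : edgesIn F v = edgesOut (F.map Prod.swap) v := by
    simp only [edgesIn, edgesOut, List.countP_map]; rfl
  have := outDeg_deleteEdges (D := flip D) (hF.map Prod.swap_injective)
    (fun e he => by
      obtain ⟨e', he', rfl⟩ := List.mem_map.mp he
      exact hFD e' he') v
  rwa [← hflip, ← hswap] at this

/-- Flow conservation along a path: every visit to `v` other than the first vertex is
entered by an edge, every visit other than the last is left by one. -/
theorem edgesOut_pathEdges_add (v : V) : ∀ {p : List V}, p ≠ [] →
    edgesOut (pathEdges p) v + (if p.getLast? = some v then 1 else 0) =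
      edgesIn (pathEdges p) v + (if p.head? = some v then 1 else 0)
  | [x], _ => by simp [pathEdges, edgesOut, edgesIn]
  | x :: y :: t, _ => by
    have ih := edgesOut_pathEdges_add v (p := y :: t) (List.cons_ne_nil y t)
    simp only [edgesOut, edgesIn, pathEdges_cons_cons, List.countP_cons, List.getLast?_cons_cons,
      List.head?_cons] at ih ⊢
    grind

theorem ite_head_le_edgesOut_pathEdges (v : V) {p : List V} (hp : 2 ≤ p.length) :
    (if p.head? = some v then 1 else 0) ≤ edgesOut (pathEdges p) v := by
  match p, hp with
  | x :: y :: t, _ => simp [edgesOut, List.countP_cons]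

theorem startsAt_cons (p : List V) (Ps : List (List V)) (v : V) :
    startsAt (p :: Ps) v = startsAt Ps v + if p.head? = some v then 1 else 0 := by
  simp [startsAt, List.countP_cons]

theorem endsAt_cons (p : List V) (Ps : List (List V)) (v : V) :
    endsAt (p :: Ps) v = endsAt Ps v + if p.getLast? = some v then 1 else 0 := by
  simp [endsAt, List.countP_cons]

theorem startsAt_append (Ps Qs : List (List V)) (v : V) :
    startsAt (Ps ++ Qs) v = startsAt Ps v + startsAt Qs v :=
  List.countP_append ..

theorem endsAt_append (Ps Qs : List (List V)) (v : V) :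
    endsAt (Ps ++ Qs) v = endsAt Ps v + endsAt Qs v :=
  List.countP_append ..

theorem edgesOut_flatten_add_endsAt (v : V) :
    ∀ {Ps : List (List V)}, (∀ p ∈ Ps, p ≠ []) →
      edgesOut (Ps.map pathEdges).flatten v + endsAt Ps v =
        edgesIn (Ps.map pathEdges).flatten v + startsAt Ps v
  | [], _ => rfl
  | p :: Ps, h => by
    have ih := edgesOut_flatten_add_endsAt v fun q hq => h q (List.mem_cons_of_mem p hq)
    have hp := edgesOut_pathEdges_add v (h p List.mem_cons_self)
    simp only [edgesOut, edgesIn, List.map_cons, List.flatten_cons, List.countP_append,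
      startsAt_cons, endsAt_cons] at ih hp ⊢
    omega

theorem startsAt_le_edgesOut_flatten (v : V) :
    ∀ {Ps : List (List V)}, (∀ p ∈ Ps, 2 ≤ p.length) →
      startsAt Ps v ≤ edgesOut (Ps.map pathEdges).flatten v
  | [], _ => le_rfl
  | p :: Ps, h => by
    have ih := startsAt_le_edgesOut_flatten v fun q hq => h q (List.mem_cons_of_mem p hq)
    have hp := ite_head_le_edgesOut_pathEdges v (h p List.mem_cons_self)
    simp only [edgesOut, List.map_cons, List.flatten_cons, List.countP_append,
      startsAt_cons] at ih hp ⊢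
    omega

theorem IsPartialDecomp.adj_of_mem {D : V → V → Prop} {Ps : List (List V)}
    (hP : IsPartialDecomp D Ps) {e : V × V} (he : e ∈ (Ps.map pathEdges).flatten) :
    D e.1 e.2 := by
  obtain ⟨p, hp, hep⟩ : ∃ p ∈ Ps, e ∈ pathEdges p := by simpa using he
  exact (hP.1 p hp).2.2 e hep

theorem IsPartialDecomp.startsAt_append_le {D : V → V → Prop} {Ps Qs : List (List V)}
    (hP : IsPartialDecomp D Ps)
    (hQ : IsPartialDecomp (deleteEdges D (Ps.map pathEdges).flatten) Qs) (v : V) :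
    startsAt (Ps ++ Qs) v ≤ exPlus D v ∧ endsAt (Ps ++ Qs) v ≤ exMinus D v := by
  have hlen : ∀ p ∈ Ps, 2 ≤ p.length := fun p hp => (hP.1 p hp).2.1
  have hout := outDeg_deleteEdges hP.2.1 (fun _ => hP.adj_of_mem) v
  have hin := inDeg_deleteEdges hP.2.1 (fun _ => hP.adj_of_mem) v
  have hflow := edgesOut_flatten_add_endsAt v fun p hp =>
    List.ne_nil_of_length_pos (zero_lt_two.trans_le (hlen p hp))
  have hstarts := startsAt_le_edgesOut_flatten v hlen
  have hPv := hP.2.2 v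
  have hQv := hQ.2.2 v
  rw [startsAt_append, endsAt_append]
  simp only [exPlus, exMinus, exInt] at hPv hQv ⊢
  omega

end

/-- If `P` is a partial decomposition of `D` and `Q` is a partial
decomposition of `D − E(P)`, then `P ∪ Q` is a partial decomposition of `D`. -/
theorem partial_decomp_union {V : Type*} [DecidableEq V] (D : V → V → Prop)
    (Ps Qs : List (List V)) (hP : IsPartialDecomp D Ps)
    (hQ : IsPartialDecomp (fun u v => D u v ∧ (u, v) ∉ (Ps.map pathEdges).flatten) Qs) :
    IsPartialDecomp D (Ps ++ Qs) := by
  refine ⟨fun p hp => ?_, ?_, hP.startsAt_append_le hQ⟩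
  · rcases List.mem_append.mp hp with hp | hp
    · exact hP.1 p hp
    · exact (hQ.1 p hp).mono fun _ _ h => h.1
  · rw [List.map_append, List.flatten_append]
    exact hP.2.1.append hQ.2.1 fun e heP heQ => (hQ.adj_of_mem heQ).2 heP
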